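/- For a 4×4 Hermitian matrix X with eigenvalues λ_1 ≥ λ_2 ≥ λ_3 ≥ λ_4 and singular values s_1 ≥ s_2 ≥ 0 of its upper-right 2×2 block, the following inequalities all hold: λ_1 − λ_4 ≥ 2s_1, λ_2 − λ_4 ≥ 2s_2, λ_1 − λ_3 ≥ 2s_2, and λ_1 + λ_2 − λ_3 − λ_4 ≥ 2(s_1 + s_2). -/

import Mathlib

/-!
For Hermitian `X` with `Y = offBlock X`, the quadratic forms of `X` at `(u, v)` and at `(u, -v)`
differ by `4 re ⟪u, Y v⟫`. For singular pairs `Y vₖ = sₖ uₖ`, the unit vectors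
`gₖ = (uₖ, vₖ)/√2` and `hₖ = (uₖ, -vₖ)/√2` therefore satisfy `⟪gₖ, X gₖ⟫ - ⟪hₖ, X hₖ⟫ = 2 sₖ`,
and each inequality comes from bounding the first term from above and the second from below by
eigenvalues of `X`. Rayleigh's bounds `λ₄ ≤ ⟪x, X x⟫ ≤ λ₁` at `g₁` and `h₁` give the first one.
A unit combination `x` of `g₁, g₂` with `x` orthogonal to the top eigenvector of `X` (or with its
mirror, the same combination of `h₁, h₂`, orthogonal to the bottom one) gives the two middle
ones, since for it the difference is at least `2 s₂`. Ky Fan's inequality for the orthonormal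
pairs `(g₁, g₂)` and `(h₁, h₂)` gives the last one.
-/

open Matrix
open scoped ComplexOrder

noncomputable section

/-- `lam` is the weakly decreasing list of eigenvalues of the Hermitian matrix `X`. -/
def IsEigList {n : ℕ} {X : Matrix (Fin n) (Fin n) ℂ} (hX : X.IsHermitian)
    (lam : Fin n → ℝ) : Prop :=
  Antitone lam ∧ ∃ e : Fin n ≃ Fin n, ∀ i, lam i = hX.eigenvalues (e i)

/-- `s` is the weakly decreasing list of singular values of `Y`. -/
def IsSingList {p q : ℕ} (Y : Matrix (Fin p) (Fin q) ℂ) (s : Fin q → ℝ) : Prop :=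
  Antitone s ∧ (∀ k, 0 ≤ s k) ∧
    ∃ e : Fin q ≃ Fin q, ∀ k,
      s k ^ 2 = (Matrix.posSemidef_conjTranspose_mul_self Y).1.eigenvalues (e k)

/-- The upper-right `p × q` block of an `(p+q) × (p+q)` matrix. -/
def offBlock {p q : ℕ} (X : Matrix (Fin (p + q)) (Fin (p + q)) ℂ) :
    Matrix (Fin p) (Fin q) ℂ :=
  fun i j => X (Fin.castAdd q i) (Fin.natAdd p j)

/-- The matrix `[[0, Y],[Yᴴ, 0]]`. -/
def blockZ {p q : ℕ} (Y : Matrix (Fin p) (Fin q) ℂ) :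
    Matrix (Fin (p + q)) (Fin (p + q)) ℂ :=
  Matrix.reindex finSumFinEquiv finSumFinEquiv (Matrix.fromBlocks 0 Y Yᴴ 0)

/-- `ν(s) = (s₁,…,s_q,0,…,0,−s_q,…,−s₁) ∈ ℝⁿ`, `n = p + q`. -/
def nuList (p q : ℕ) (s : Fin q → ℝ) : Fin (p + q) → ℝ :=
  fun k =>
    if h : (k : ℕ) < q then s ⟨k, h⟩
    else if h' : p ≤ (k : ℕ) then
      -s ⟨p + q - 1 - (k : ℕ), by have := k.isLt; omega⟩
    else 0

/-- The matrix `I_{p,q} = Diag(I_p, −I_q)`. -/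
def Ipq (p q : ℕ) : Matrix (Fin (p + q)) (Fin (p + q)) ℂ :=
  Matrix.diagonal fun k => if (k : ℕ) < p then 1 else -1

/-- The `U(n)`-conjugation orbit of a matrix. -/
def uOrbit {n : ℕ} (X : Matrix (Fin n) (Fin n) ℂ) : Set (Matrix (Fin n) (Fin n) ℂ) :=
  { Y | ∃ g ∈ Matrix.unitaryGroup (Fin n) ℂ, Y = g * X * star g }

/-- Membership in the Horn cone `Horn(n)`. -/
def HornMem {n : ℕ} (x y z : Fin n → ℝ) : Prop :=
  ∃ (A B : Matrix (Fin n) (Fin n) ℂ) (hA : A.IsHermitian) (hB : B.IsHermitian)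
    (hC : (A + B).IsHermitian), IsEigList hA x ∧ IsEigList hB y ∧ IsEigList hC z

open scoped InnerProductSpace
open RCLike

theorem Finset.sum_mul_le_sum_of_le_one {ι : Type*} [Fintype ι] [DecidableEq ι]
    {μ w : ι → ℝ} {S : Finset ι} {c : ℝ}
    (hw₀ : ∀ i, 0 ≤ w i) (hw₁ : ∀ i, w i ≤ 1) (hw : ∑ i, w i = S.card)
    (hS : ∀ i ∈ S, c ≤ μ i) (hSc : ∀ i ∉ S, μ i ≤ c) :
    ∑ i, μ i * w i ≤ ∑ i ∈ S, μ i := by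
  have hterm : ∀ i, (μ i - c) * (w i - if i ∈ S then 1 else 0) ≤ 0 := by
    intro i
    split_ifs with hi
    · exact mul_nonpos_of_nonneg_of_nonpos (by linarith [hS i hi]) (by linarith [hw₁ i])
    · exact mul_nonpos_of_nonpos_of_nonneg (by linarith [hSc i hi]) (by linarith [hw₀ i])
  have hsum : ∑ i, (μ i - c) * (w i - if i ∈ S then 1 else 0)
      = ∑ i, μ i * w i - ∑ i ∈ S, μ i - c * (∑ i, w i - S.card) := by
    simp only [mul_sub, sub_mul, Finset.sum_sub_distrib, mul_ite, mul_one, mul_zero,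
      Finset.sum_ite_mem, Finset.univ_inter, Finset.mul_sum, Finset.sum_const, nsmul_eq_mul]
    ring
  have := Finset.sum_nonpos fun i (_ : i ∈ Finset.univ) => hterm i
  rw [hsum, hw, sub_self, mul_zero, sub_zero] at this
  linarith

theorem exists_ne_zero_inner_apply_eq_zero {𝕜 V E : Type*} [RCLike 𝕜] [AddCommGroup V]
    [Module 𝕜 V] [FiniteDimensional 𝕜 V] [NormedAddCommGroup E] [InnerProductSpace 𝕜 E]
    (f : V →ₗ[𝕜] E) (w : E) (hV : 1 < Module.finrank 𝕜 V) : ∃ a ≠ 0, ⟪w, f a⟫_𝕜 = 0 := by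
  have hker := LinearMap.ker_ne_bot_of_finrank_lt (f := (innerₛₗ 𝕜 w).comp f)
    (by rwa [Module.finrank_self])
  obtain ⟨a, ha, ha0⟩ := Submodule.exists_mem_ne_zero_of_ne_bot hker
  exact ⟨a, ha0, ha⟩

namespace OrthonormalBasis

variable {𝕜 E ι κ : Type*} [RCLike 𝕜] [NormedAddCommGroup E] [InnerProductSpace 𝕜 E]
  [Fintype ι] [Fintype κ] (b : OrthonormalBasis ι 𝕜 E) {T : E →ₗ[𝕜] E} {μ : ι → ℝ}

theorem re_inner_apply_self_eq_sum (hT : ∀ i, T (b i) = (μ i : 𝕜) • b i) (x : E) :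
    re ⟪x, T x⟫_𝕜 = ∑ i, μ i * ‖⟪b i, x⟫_𝕜‖ ^ 2 := by
  have hTx : T x = ∑ i, (⟪b i, x⟫_𝕜 * μ i) • b i := by
    conv_lhs => rw [← b.sum_repr' x]
    simp [map_sum, hT, smul_smul]
  rw [hTx, inner_sum, map_sum]
  refine Finset.sum_congr rfl fun i _ => ?_
  rw [inner_smul_right, ← inner_conj_symm x (b i), mul_right_comm, RCLike.mul_conj]
  norm_cast
  rw [mul_comm]

theorem re_inner_apply_self_le (hT : ∀ i, T (b i) = (μ i : 𝕜) • b i) {x : E} {c : ℝ}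
    (hc : ∀ i, ⟪b i, x⟫_𝕜 ≠ 0 → μ i ≤ c) :
    re ⟪x, T x⟫_𝕜 ≤ c * ‖x‖ ^ 2 := by
  rw [b.re_inner_apply_self_eq_sum hT, ← b.sum_sq_norm_inner_right x, Finset.mul_sum]
  refine Finset.sum_le_sum fun i _ => ?_
  by_cases hi : ⟪b i, x⟫_𝕜 = 0
  · simp [hi]
  · exact mul_le_mul_of_nonneg_right (hc i hi) (sq_nonneg _)

theorem le_re_inner_apply_self (hT : ∀ i, T (b i) = (μ i : 𝕜) • b i) {x : E} {c : ℝ}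
    (hc : ∀ i, ⟪b i, x⟫_𝕜 ≠ 0 → c ≤ μ i) :
    c * ‖x‖ ^ 2 ≤ re ⟪x, T x⟫_𝕜 := by
  rw [b.re_inner_apply_self_eq_sum hT, ← b.sum_sq_norm_inner_right x, Finset.mul_sum]
  refine Finset.sum_le_sum fun i _ => ?_
  by_cases hi : ⟪b i, x⟫_𝕜 = 0
  · simp [hi]
  · exact mul_le_mul_of_nonneg_right (hc i hi) (sq_nonneg _)

theorem sum_sq_norm_inner_le_one {v : κ → E} (hv : Orthonormal 𝕜 v) (i : ι) :
    ∑ j, ‖⟪b i, v j⟫_𝕜‖ ^ 2 ≤ 1 := by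
  simpa [norm_inner_symm, b.orthonormal.1 i] using
    hv.sum_inner_products_le (s := Finset.univ) (x := b i)

theorem sum_sum_sq_norm_inner {v : κ → E} (hv : Orthonormal 𝕜 v) :
    ∑ i, ∑ j, ‖⟪b i, v j⟫_𝕜‖ ^ 2 = Fintype.card κ := by
  rw [Finset.sum_comm]
  simp [b.sum_sq_norm_inner_right, hv.1]

theorem sum_re_inner_apply_self_le [DecidableEq ι] (hT : ∀ i, T (b i) = (μ i : 𝕜) • b i)
    {v : κ → E} (hv : Orthonormal 𝕜 v) {S : Finset ι} (hS : S.card = Fintype.card κ) {c : ℝ}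
    (hcS : ∀ i ∈ S, c ≤ μ i) (hcSc : ∀ i ∉ S, μ i ≤ c) :
    ∑ j, re ⟪v j, T (v j)⟫_𝕜 ≤ ∑ i ∈ S, μ i := by
  calc ∑ j, re ⟪v j, T (v j)⟫_𝕜 = ∑ i, μ i * ∑ j, ‖⟪b i, v j⟫_𝕜‖ ^ 2 := by
        simp_rw [b.re_inner_apply_self_eq_sum hT, Finset.mul_sum]
        exact Finset.sum_comm
    _ ≤ ∑ i ∈ S, μ i :=
        Finset.sum_mul_le_sum_of_le_one (fun i => by positivity) (b.sum_sq_norm_inner_le_one hv)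
          (by rw [b.sum_sum_sq_norm_inner hv, hS]) hcS hcSc

theorem sum_le_sum_re_inner_apply_self [DecidableEq ι] (hT : ∀ i, T (b i) = (μ i : 𝕜) • b i)
    {v : κ → E} (hv : Orthonormal 𝕜 v) {S : Finset ι} (hS : S.card = Fintype.card κ) {c : ℝ}
    (hcS : ∀ i ∈ S, μ i ≤ c) (hcSc : ∀ i ∉ S, c ≤ μ i) :
    ∑ i ∈ S, μ i ≤ ∑ j, re ⟪v j, T (v j)⟫_𝕜 := by
  have hnegT : ∀ i, (-T) (b i) = ((-μ i : ℝ) : 𝕜) • b i := fun i => by simp [hT]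
  have := b.sum_re_inner_apply_self_le hnegT hv hS (c := -c)
    (fun i hi => neg_le_neg (hcS i hi)) (fun i hi => neg_le_neg (hcSc i hi))
  simpa [Finset.sum_neg_distrib] using this

end OrthonormalBasis

section Singular

variable {𝕜 m n : Type*} [RCLike 𝕜] [Fintype m] [DecidableEq m] [Fintype n] [DecidableEq n]

theorem Matrix.inner_toEuclideanLin_toEuclideanLin (Y : Matrix m n 𝕜)
    (x y : EuclideanSpace 𝕜 n) :
    ⟪Y.toEuclideanLin x, Y.toEuclideanLin y⟫_𝕜 = ⟪x, (Yᴴ * Y).toEuclideanLin y⟫_𝕜 := by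
  rw [Matrix.toLpLin_mul_same, LinearMap.comp_apply,
    Matrix.toEuclideanLin_conjTranspose_eq_adjoint, LinearMap.adjoint_inner_right]

theorem Matrix.IsHermitian.exists_orthonormalBasis_of_eq_eigenvalues {A : Matrix n n 𝕜}
    (hA : A.IsHermitian) {μ : n → ℝ} (e : n ≃ n) (hμ : ∀ i, μ i = hA.eigenvalues (e i)) :
    ∃ b : OrthonormalBasis n 𝕜 (EuclideanSpace 𝕜 n),
      ∀ i, A.toEuclideanLin (b i) = (μ i : 𝕜) • b i := by
  refine ⟨hA.eigenvectorBasis.reindex e.symm, fun i => ?_⟩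
  have := hA.mulVec_eigenvectorBasis (e i)
  rw [← hμ i] at this
  rw [OrthonormalBasis.reindex_apply, Equiv.symm_symm, toLpLin_apply, this,
    RCLike.real_smul_eq_coe_smul (K := 𝕜)]
  rfl

theorem Matrix.orthonormal_inv_smul_toEuclideanLin {ι : Type*} (Y : Matrix m n 𝕜)
    {v : ι → EuclideanSpace 𝕜 n} (hv : Orthonormal 𝕜 v) {σ : ι → ℝ} (hσ : ∀ k, σ k ≠ 0)
    (h : ∀ k, (Yᴴ * Y).toEuclideanLin (v k) = ((σ k ^ 2 : ℝ) : 𝕜) • v k) :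
    Orthonormal 𝕜 fun k => (σ k : 𝕜)⁻¹ • Y.toEuclideanLin (v k) := by
  classical
  rw [orthonormal_iff_ite] at hv ⊢
  intro j k
  rw [inner_smul_left, inner_smul_right, Y.inner_toEuclideanLin_toEuclideanLin, h k,
    inner_smul_right, hv j k]
  split_ifs with hjk
  · subst hjk
    have : (σ j : 𝕜) ≠ 0 := by exact_mod_cast hσ j
    simp only [map_inv₀, RCLike.conj_ofReal, RCLike.ofReal_pow, mul_one]
    field_simp
  · simp

end Singular

theorem IsEigList.exists_orthonormalBasis {n : ℕ} {X : Matrix (Fin n) (Fin n) ℂ}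
    {hX : X.IsHermitian} {lam : Fin n → ℝ} (hlam : IsEigList hX lam) :
    ∃ b : OrthonormalBasis (Fin n) ℂ (EuclideanSpace ℂ (Fin n)),
      ∀ i, X.toEuclideanLin (b i) = (lam i : ℂ) • b i :=
  let ⟨_, e, he⟩ := hlam
  hX.exists_orthonormalBasis_of_eq_eigenvalues e he

theorem IsSingList.exists_svd {n : ℕ} {Y : Matrix (Fin n) (Fin n) ℂ} {s : Fin n → ℝ}
    (hs : IsSingList Y s) :
    ∃ u v : OrthonormalBasis (Fin n) ℂ (EuclideanSpace ℂ (Fin n)),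
      ∀ k, Y.toEuclideanLin (v k) = (s k : ℂ) • u k := by
  obtain ⟨-, -, e, he⟩ := hs
  obtain ⟨v, hv⟩ :=
    (posSemidef_conjTranspose_mul_self Y).1.exists_orthonormalBasis_of_eq_eigenvalues
      (μ := fun k => s k ^ 2) e he
  let S : Set (Fin n) := {k | s k ≠ 0}
  have hS : Orthonormal ℂ (S.domRestrict fun k => (s k : ℂ)⁻¹ • Y.toEuclideanLin (v k)) :=
    Y.orthonormal_inv_smul_toEuclideanLin (v.orthonormal.comp _ Subtype.val_injective)
      (fun k => k.2) (fun k => hv k)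
  obtain ⟨u, hu⟩ := hS.exists_orthonormalBasis_extension_of_card_eq (by simp)
  refine ⟨u, v, fun k => ?_⟩
  by_cases hk : s k = 0
  · have h := Y.inner_toEuclideanLin_toEuclideanLin (v k) (v k)
    rw [hv k, hk] at h
    simpa [hk] using h
  · rw [hu k hk, smul_smul, mul_inv_cancel₀ (by exact_mod_cast hk), one_smul]

section Block

variable {p q : ℕ}

def blockVec (u : EuclideanSpace ℂ (Fin p)) (v : EuclideanSpace ℂ (Fin q)) :
    EuclideanSpace ℂ (Fin (p + q)) :=
  WithLp.toLp 2 (Fin.append u.ofLp v.ofLp)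

theorem inner_blockVec (u u' : EuclideanSpace ℂ (Fin p)) (v v' : EuclideanSpace ℂ (Fin q)) :
    ⟪blockVec u v, blockVec u' v'⟫_ℂ = ⟪u, u'⟫_ℂ + ⟪v, v'⟫_ℂ := by
  simp [blockVec, PiLp.inner_apply, Fin.sum_univ_add]

theorem blockVec_add (u u' : EuclideanSpace ℂ (Fin p)) (v v' : EuclideanSpace ℂ (Fin q)) :
    blockVec (u + u') (v + v') = blockVec u v + blockVec u' v' := by
  ext i
  refine Fin.addCases (fun i => ?_) (fun i => ?_) i <;> simp [blockVec]

theorem blockVec_smul (c : ℂ) (u : EuclideanSpace ℂ (Fin p)) (v : EuclideanSpace ℂ (Fin q)) :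
    blockVec (c • u) (c • v) = c • blockVec u v := by
  ext i
  refine Fin.addCases (fun i => ?_) (fun i => ?_) i <;> simp [blockVec]

variable {X : Matrix (Fin (p + q)) (Fin (p + q)) ℂ}

theorem inner_toEuclideanLin_blockVec_sub (hX : X.IsHermitian) (u : EuclideanSpace ℂ (Fin p))
    (v : EuclideanSpace ℂ (Fin q)) :
    ⟪blockVec u v, X.toEuclideanLin (blockVec u v)⟫_ℂ
        - ⟪blockVec u (-v), X.toEuclideanLin (blockVec u (-v))⟫_ℂ
      = 2 * (⟪u, (offBlock X).toEuclideanLin v⟫_ℂ + ⟪v, (offBlock X)ᴴ.toEuclideanLin u⟫_ℂ) := by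
  simp only [blockVec, PiLp.inner_apply, Fin.sum_univ_add, toLpLin_apply, Matrix.mulVec,
    dotProduct, Fin.append_left, Fin.append_right, PiLp.neg_apply, offBlock,
    Matrix.conjTranspose_apply, hX.apply, RCLike.inner_apply, add_mul, Finset.sum_add_distrib,
    map_neg, mul_neg, neg_mul, Finset.sum_neg_distrib]
  ring

theorem re_inner_toEuclideanLin_blockVec_sub (hX : X.IsHermitian)
    (u : EuclideanSpace ℂ (Fin p)) (v : EuclideanSpace ℂ (Fin q)) :
    re ⟪blockVec u v, X.toEuclideanLin (blockVec u v)⟫_ℂ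
        - re ⟪blockVec u (-v), X.toEuclideanLin (blockVec u (-v))⟫_ℂ
      = 4 * re ⟪u, (offBlock X).toEuclideanLin v⟫_ℂ := by
  rw [← map_sub, inner_toEuclideanLin_blockVec_sub hX,
    Matrix.toEuclideanLin_conjTranspose_eq_adjoint, LinearMap.adjoint_inner_right,
    ← inner_conj_symm ((offBlock X).toEuclideanLin v) u]
  simp only [RCLike.mul_re, map_add, RCLike.conj_re, RCLike.conj_im]
  norm_num
  ring

end Block

section BlockCombination

variable {p q : ℕ} {κ : Type*} [Fintype κ] {u : κ → EuclideanSpace ℂ (Fin p)}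
  {v : κ → EuclideanSpace ℂ (Fin q)}

def blockCombination (u : κ → EuclideanSpace ℂ (Fin p)) (v : κ → EuclideanSpace ℂ (Fin q)) :
    (κ → ℂ) →ₗ[ℂ] EuclideanSpace ℂ (Fin (p + q)) where
  toFun a := ((√2 : ℝ)⁻¹ : ℂ) • blockVec (∑ k, a k • u k) (∑ k, a k • v k)
  map_add' a a' := by
    simp only [Pi.add_apply, add_smul, Finset.sum_add_distrib, blockVec_add, smul_add]
  map_smul' c a := by
    simp only [Pi.smul_apply, smul_eq_mul, mul_smul, ← Finset.smul_sum, blockVec_smul,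
      RingHom.id_apply]
    exact smul_comm _ _ _

theorem inner_blockCombination (hu : Orthonormal ℂ u) (hv : Orthonormal ℂ v) (a a' : κ → ℂ) :
    ⟪blockCombination u v a, blockCombination u v a'⟫_ℂ = ∑ k, starRingEnd ℂ (a k) * a' k := by
  have hc : ((√2 : ℝ) : ℂ)⁻¹ * ((√2 : ℝ) : ℂ)⁻¹ = 2⁻¹ := by
    rw [← mul_inv, ← Complex.ofReal_mul, Real.mul_self_sqrt zero_le_two, Complex.ofReal_ofNat]
  simp only [blockCombination, LinearMap.coe_mk, AddHom.coe_mk, inner_smul_left,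
    inner_smul_right, inner_blockVec, hu.inner_sum, hv.inner_sum, map_inv₀, Complex.conj_ofReal]
  rw [← mul_assoc, hc]
  ring

theorem norm_blockCombination_sq (hu : Orthonormal ℂ u) (hv : Orthonormal ℂ v) (a : κ → ℂ) :
    ‖blockCombination u v a‖ ^ 2 = ∑ k, ‖a k‖ ^ 2 := by
  rw [@norm_sq_eq_re_inner ℂ, inner_blockCombination hu hv, map_sum]
  simp [RCLike.conj_mul, ← Complex.ofReal_pow]

theorem orthonormal_blockCombination_single [DecidableEq κ] (hu : Orthonormal ℂ u)
    (hv : Orthonormal ℂ v) : Orthonormal ℂ fun k => blockCombination u v (Pi.single k 1) := by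
  rw [orthonormal_iff_ite]
  intro j k
  simp [inner_blockCombination hu hv, Pi.single_apply, eq_comm]

variable {X : Matrix (Fin (p + q)) (Fin (p + q)) ℂ} {σ : κ → ℝ}

theorem re_inner_blockCombination_sub (hX : X.IsHermitian) (hu : Orthonormal ℂ u)
    (huv : ∀ k, (offBlock X).toEuclideanLin (v k) = (σ k : ℂ) • u k) (a : κ → ℂ) :
    re ⟪blockCombination u v a, X.toEuclideanLin (blockCombination u v a)⟫_ℂ
        - re ⟪blockCombination u (-v) a, X.toEuclideanLin (blockCombination u (-v) a)⟫_ℂ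
      = 2 * ∑ k, σ k * ‖a k‖ ^ 2 := by
  set c : ℂ := ((√2 : ℝ) : ℂ)⁻¹
  have hg : blockCombination u v a = blockVec (c • ∑ k, a k • u k) (c • ∑ k, a k • v k) :=
    (blockVec_smul _ _ _).symm
  have hh : blockCombination u (-v) a
      = blockVec (c • ∑ k, a k • u k) (-(c • ∑ k, a k • v k)) := by
    simp only [blockCombination, LinearMap.coe_mk, AddHom.coe_mk, Pi.neg_apply, smul_neg,
      Finset.sum_neg_distrib, ← blockVec_smul]
    rfl
  have hYv : (offBlock X).toEuclideanLin (∑ k, a k • v k) = ∑ k, (a k * σ k) • u k := by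
    simp only [map_sum, map_smul, huv, smul_smul]
  have hc : starRingEnd ℂ c * c = 2⁻¹ := by
    rw [map_inv₀, Complex.conj_ofReal, ← mul_inv, ← Complex.ofReal_mul,
      Real.mul_self_sqrt zero_le_two, Complex.ofReal_ofNat]
  have hsum : ∑ k, starRingEnd ℂ (a k) * (a k * σ k) = ((∑ k, σ k * ‖a k‖ ^ 2 : ℝ) : ℂ) := by
    push_cast
    refine Finset.sum_congr rfl fun k _ => ?_
    rw [← mul_assoc, Complex.conj_mul']
    ring
  rw [hg, hh, re_inner_toEuclideanLin_blockVec_sub hX, map_smul, hYv, inner_smul_left,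
    inner_smul_right, hu.inner_sum, ← mul_assoc, hc, hsum]
  simp only [RCLike.re_to_complex, Complex.re_mul_ofReal]
  norm_num
  ring

variable {b : OrthonormalBasis (Fin (p + q)) ℂ (EuclideanSpace ℂ (Fin (p + q)))}
  {lam : Fin (p + q) → ℝ}

theorem two_mul_le_sub_of_blockCombination (hX : X.IsHermitian) (hu : Orthonormal ℂ u)
    (hv : Orthonormal ℂ v) (huv : ∀ k, (offBlock X).toEuclideanLin (v k) = (σ k : ℂ) • u k)
    (hb : ∀ i, X.toEuclideanLin (b i) = (lam i : ℂ) • b i) (a : κ → ℂ) (ha : a ≠ 0)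
    {σ₀ M m : ℝ} (hσ : ∀ k, a k ≠ 0 → σ₀ ≤ σ k)
    (hM : ∀ i, ⟪b i, blockCombination u v a⟫_ℂ ≠ 0 → lam i ≤ M)
    (hm : ∀ i, ⟪b i, blockCombination u (-v) a⟫_ℂ ≠ 0 → m ≤ lam i) :
    2 * σ₀ ≤ M - m := by
  have hv' : Orthonormal ℂ (-v) := hv.orthonormal_of_forall_eq_or_eq_neg fun k => Or.inr rfl
  have hN : 0 < ∑ k, ‖a k‖ ^ 2 := by
    obtain ⟨k, hk⟩ := Function.ne_iff.mp ha
    exact Finset.sum_pos' (fun k _ => by positivity) ⟨k, Finset.mem_univ _, by positivity⟩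
  have hup := b.re_inner_apply_self_le hb hM
  have hlow := b.le_re_inner_apply_self hb hm
  rw [norm_blockCombination_sq hu hv] at hup
  rw [norm_blockCombination_sq hu hv'] at hlow
  have hdiff := re_inner_blockCombination_sub hX hu huv a
  have hσsum : σ₀ * ∑ k, ‖a k‖ ^ 2 ≤ ∑ k, σ k * ‖a k‖ ^ 2 := by
    rw [Finset.mul_sum]
    refine Finset.sum_le_sum fun k _ => ?_
    by_cases hk : a k = 0
    · simp [hk]
    · exact mul_le_mul_of_nonneg_right (hσ k hk) (by positivity)
  exact le_of_mul_le_mul_right (by linarith) hN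

theorem two_mul_sum_le_sub_of_blockCombination [DecidableEq κ] (hX : X.IsHermitian)
    (hu : Orthonormal ℂ u) (hv : Orthonormal ℂ v)
    (huv : ∀ k, (offBlock X).toEuclideanLin (v k) = (σ k : ℂ) • u k)
    (hb : ∀ i, X.toEuclideanLin (b i) = (lam i : ℂ) • b i) {S T : Finset (Fin (p + q))}
    (hS : S.card = Fintype.card κ) (hT : T.card = Fintype.card κ) {c d : ℝ}
    (hcS : ∀ i ∈ S, c ≤ lam i) (hcSc : ∀ i ∉ S, lam i ≤ c)
    (hdT : ∀ i ∈ T, lam i ≤ d) (hdTc : ∀ i ∉ T, d ≤ lam i) :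
    2 * ∑ k, σ k ≤ ∑ i ∈ S, lam i - ∑ i ∈ T, lam i := by
  have hv' : Orthonormal ℂ (-v) := hv.orthonormal_of_forall_eq_or_eq_neg fun k => Or.inr rfl
  have hup := b.sum_re_inner_apply_self_le hb (orthonormal_blockCombination_single hu hv) hS
    hcS hcSc
  have hlow := b.sum_le_sum_re_inner_apply_self hb (orthonormal_blockCombination_single hu hv')
    hT hdT hdTc
  have hdiff : ∀ k,
      re ⟪blockCombination u v (Pi.single k 1),
          X.toEuclideanLin (blockCombination u v (Pi.single k 1))⟫_ℂ
        - re ⟪blockCombination u (-v) (Pi.single k 1),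
          X.toEuclideanLin (blockCombination u (-v) (Pi.single k 1))⟫_ℂ = 2 * σ k := fun k => by
    rw [re_inner_blockCombination_sub hX hu huv]
    simp [Pi.single_apply, apply_ite]
  have := Finset.sum_congr rfl fun k (_ : k ∈ Finset.univ) => hdiff k
  rw [Finset.sum_sub_distrib, ← Finset.mul_sum] at this
  linarith

end BlockCombination

/-- the inequalities describing `𝒜(2,2)`. -/
theorem A22_inequalities (X : Matrix (Fin (2 + 2)) (Fin (2 + 2)) ℂ)
    (hX : X.IsHermitian)
    (lam : Fin (2 + 2) → ℝ) (hlam : IsEigList hX lam)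
    (s : Fin 2 → ℝ) (hs : IsSingList (offBlock X) s) :
    lam 0 - lam 3 ≥ 2 * s 0 ∧ lam 1 - lam 3 ≥ 2 * s 1 ∧
      lam 0 - lam 2 ≥ 2 * s 1 ∧
      lam 0 + lam 1 - lam 2 - lam 3 ≥ 2 * (s 0 + s 1) := by
  obtain ⟨b, hb⟩ := hlam.exists_orthonormalBasis
  obtain ⟨u, v, huv⟩ := hs.exists_svd
  have hl : ∀ i j, i ≤ j → lam j ≤ lam i := fun i j h => hlam.1 h
  have hs₁ : ∀ k, s 1 ≤ s k := fun k => hs.1 (Fin.le_last k)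
  have bound := two_mul_le_sub_of_blockCombination hX u.orthonormal v.orthonormal huv hb
  have hdim : 1 < Module.finrank ℂ (Fin 2 → ℂ) := by simp
  obtain ⟨a, ha, hab⟩ := exists_ne_zero_inner_apply_eq_zero (blockCombination ⇑u ⇑v) (b 0) hdim
  obtain ⟨a', ha', hab'⟩ :=
    exists_ne_zero_inner_apply_eq_zero (blockCombination ⇑u (-⇑v)) (b 3) hdim
  refine ⟨?_, ?_, ?_, ?_⟩
  · exact bound (Pi.single 0 1) (by simp) (fun k hk => by fin_cases k <;> simp_all)
      (fun i _ => hl 0 i (Fin.zero_le i)) (fun i _ => hl i 3 (Fin.le_last i))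
  · exact bound a ha (fun k _ => hs₁ k)
      (fun i hi => by fin_cases i <;> first | exact absurd hab hi | exact hl _ _ (by decide))
      (fun i _ => hl i 3 (Fin.le_last i))
  · exact bound a' ha' (fun k _ => hs₁ k) (fun i _ => hl 0 i (Fin.zero_le i))
      (fun i hi => by fin_cases i <;> first | exact absurd hab' hi | exact hl _ _ (by decide))
  · have kyFan := two_mul_sum_le_sub_of_blockCombination hX u.orthonormal v.orthonormal huv hb
      (S := {0, 1}) (T := {2, 3}) (c := lam 1) (d := lam 2) rfl rfl ?_ ?_ ?_ ?_
    · simp only [Fin.sum_univ_two, Finset.sum_pair (by decide : (0 : Fin (2 + 2)) ≠ 1),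
        Finset.sum_pair (by decide : (2 : Fin (2 + 2)) ≠ 3)] at kyFan
      linarith
    all_goals
      intro i hi
      fin_cases i <;> first | exact absurd hi (by decide) | exact hl _ _ (by decide)
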